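/- Let N0 ∈ K, V0 ∈ L²(0,1), and set N(t) := proj_K(N0 + t·V0) for t ≥ 0. Then the function θ(t) := ∫₀¹ V0(x)N(t,x)dx is nondecreasing on [0,∞). If moreover sup_{t ≥ 0} ‖N(t)‖_{L²(0,1)} < ∞ (in particular, if there is R such that |N(t,x)| ≤ R for a.e. x and all t), then θ(t) ≤ 0 for all t ≥ 0 and lim_{t→∞} θ(t) = 0. -/

import Mathlib

open MeasureTheory

open scoped RealInnerProductSpace

/-- Lebesgue measure restricted to the interval `(0,1)`; `L²(0,1)` is `Lp ℝ 2 μ01`. -/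
noncomputable def μ01 : Measure ℝ := volume.restrict (Set.Ioo 0 1)

/-- `K` is the set of elements of `L²(0,1)` admitting a nondecreasing representative
on `(0,1)`; it is a nonempty closed convex cone. -/
def K01 : Set (Lp ℝ 2 μ01) :=
  {f | ∃ g : ℝ → ℝ, MonotoneOn g (Set.Ioo 0 1) ∧ (f : ℝ → ℝ) =ᵐ[μ01] g}

lemma K01_zero : (0 : Lp ℝ 2 μ01) ∈ K01 :=
  ⟨fun _ => 0, monotoneOn_const, Lp.coeFn_zero ℝ 2 μ01⟩

lemma K01_smul {c : ℝ} (hc : 0 ≤ c) {f : Lp ℝ 2 μ01} (hf : f ∈ K01) : c • f ∈ K01 := by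
  obtain ⟨g, hg, hfg⟩ := hf
  refine ⟨fun x => c * g x, fun a ha b hb hab => mul_le_mul_of_nonneg_left (hg ha hb hab) hc, ?_⟩
  filter_upwards [Lp.coeFn_smul c f, hfg] with x h1 h2
  rw [h1, Pi.smul_apply, h2, smul_eq_mul]

lemma K01_add {f g : Lp ℝ 2 μ01} (hf : f ∈ K01) (hg : g ∈ K01) : f + g ∈ K01 := by
  obtain ⟨gf, hgf, hffg⟩ := hf
  obtain ⟨gg, hgg, hggg⟩ := hg
  refine ⟨fun x => gf x + gg x, fun a ha b hb hab => add_le_add (hgf ha hb hab) (hgg ha hb hab), ?_⟩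
  filter_upwards [Lp.coeFn_add f g, hffg, hggg] with x h1 h2 h3
  rw [h1, Pi.add_apply, h2, h3]

lemma K01_convex : Convex ℝ K01 := fun _ hf _ hg a b ha hb _ =>
  K01_add (K01_smul ha hf) (K01_smul hb hg)

lemma proj_VI (proj : Lp ℝ 2 μ01 → Lp ℝ 2 μ01)
    (hprojmem : ∀ u, proj u ∈ K01)
    (hprojnear : ∀ u, ∀ k ∈ K01, ‖u - proj u‖ ≤ ‖u - k‖)
    (u : Lp ℝ 2 μ01) : ∀ k ∈ K01, ⟪u - proj u, k - proj u⟫ ≤ 0 := by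
  intro k hk
  set v := proj u with hv
  set p : ℝ := ⟪u - v, k - v⟫ with hp
  set q : ℝ := ‖k - v‖ ^ 2 with hq
  have key : ∀ c : ℝ, 0 < c → c ≤ 1 → 2 * c * p ≤ c ^ 2 * q := by
    intro c hc0 hc1
    have hmem : c • k + (1 - c) • v ∈ K01 :=
      K01_convex hk (hprojmem u) (le_of_lt hc0) (by linarith) (by ring)
    have h := hprojnear u _ hmem
    have hsq : ‖u - v‖ ^ 2 ≤ ‖u - (c • k + (1 - c) • v)‖ ^ 2 :=
      pow_le_pow_left₀ (norm_nonneg _) h 2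
    have hrw : u - (c • k + (1 - c) • v) = (u - v) - c • (k - v) := by
      rw [smul_sub, sub_smul, one_smul]; abel
    have hexp : ‖(u - v) - c • (k - v)‖ ^ 2 = ‖u - v‖ ^ 2 - 2 * (c * p) + c ^ 2 * q := by
      rw [norm_sub_sq_real, real_inner_smul_right, norm_smul, Real.norm_eq_abs,
        abs_of_pos hc0, mul_pow, hp, hq]
    rw [hrw, hexp] at hsq
    linarith
  by_contra hcon
  push_neg at hcon
  have hq0 : 0 ≤ q := sq_nonneg _
  rcases eq_or_lt_of_le hq0 with hqz | hqpos
  · have := key 1 one_pos le_rfl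
    nlinarith
  · set c := min 1 (p / q) with hc
    have hc0 : 0 < c := lt_min one_pos (div_pos hcon hqpos)
    have hc1 : c ≤ 1 := min_le_left _ _
    have hcq : c * q ≤ p := by
      calc c * q ≤ (p / q) * q := mul_le_mul_of_nonneg_right (min_le_right _ _) hq0
        _ = p := by field_simp
    have := key c hc0 hc1
    nlinarith [mul_pos hc0 hcon, mul_le_mul_of_nonneg_left hcq (le_of_lt hc0)]

lemma proj_orth (proj : Lp ℝ 2 μ01 → Lp ℝ 2 μ01)
    (hprojmem : ∀ u, proj u ∈ K01)
    (hprojnear : ∀ u, ∀ k ∈ K01, ‖u - proj u‖ ≤ ‖u - k‖)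
    (u : Lp ℝ 2 μ01) : ⟪u - proj u, proj u⟫ = 0 := by
  have h1 := proj_VI proj hprojmem hprojnear u 0 K01_zero
  have h2 := proj_VI proj hprojmem hprojnear u ((2 : ℝ) • proj u)
    (K01_smul (by norm_num) (hprojmem u))
  rw [zero_sub, inner_neg_right] at h1
  have : (2 : ℝ) • proj u - proj u = proj u := by
    rw [two_smul]; abel
  rw [this] at h2
  linarith

/-- Let `N0 ∈ K`, `V0 ∈ L²(0,1)`, set `N t := proj_K (N0 + t • V0)` for
`t ≥ 0`.  Then `θ t := ∫₀¹ V0(x) N(t,x) dx` is nondecreasing on `[0,∞)`.  If moreover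
`sup_{t ≥ 0} ‖N t‖ < ∞`, then `θ t ≤ 0` for all `t ≥ 0` and `θ t → 0` as `t → ∞`. -/
theorem theta_monotone_and_null_limit
    (proj : Lp ℝ 2 μ01 → Lp ℝ 2 μ01)
    (hprojmem : ∀ u, proj u ∈ K01)
    (hprojnear : ∀ u, ∀ k ∈ K01, ‖u - proj u‖ ≤ ‖u - k‖)
    (N0 V0 : Lp ℝ 2 μ01) (hN0K : N0 ∈ K01)
    (N : ℝ → Lp ℝ 2 μ01)
    (hN : ∀ t : ℝ, 0 ≤ t → N t = proj (N0 + t • V0))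
    (θ : ℝ → ℝ)
    (hθ : ∀ t : ℝ, 0 ≤ t → θ t = ∫ x, (V0 : ℝ → ℝ) x * (N t : ℝ → ℝ) x ∂μ01) :
    (∀ s t : ℝ, 0 ≤ s → s ≤ t → θ s ≤ θ t) ∧
      ((∃ C : ℝ, ∀ t : ℝ, 0 ≤ t → ‖N t‖ ≤ C) →
        (∀ t : ℝ, 0 ≤ t → θ t ≤ 0) ∧
          Filter.Tendsto θ Filter.atTop (nhds 0)) := by
  -- θ is the inner product with V0
  have hθ' : ∀ t : ℝ, 0 ≤ t → θ t = ⟪V0, N t⟫ := by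
    intro t ht
    rw [hθ t ht, L2.inner_def]
    simp [RCLike.inner_apply]
    exact integral_congr_ae (Filter.Eventually.of_forall fun x => mul_comm _ _)
  have hNK : ∀ t : ℝ, 0 ≤ t → N t ∈ K01 := fun t ht => (hN t ht) ▸ hprojmem _
  -- variational inequality at N t
  have hVI : ∀ t : ℝ, 0 ≤ t → ∀ k ∈ K01, ⟪N0 + t • V0 - N t, k - N t⟫ ≤ 0 := by
    intro t ht k hk
    rw [hN t ht]
    exact proj_VI proj hprojmem hprojnear _ k hk
  have horth : ∀ t : ℝ, 0 ≤ t → ⟪N0 + t • V0 - N t, N t⟫ = 0 := by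
    intro t ht
    rw [hN t ht]
    exact proj_orth proj hprojmem hprojnear _
  -- monotonicity
  have hmono : ∀ s t : ℝ, 0 ≤ s → s ≤ t → θ s ≤ θ t := by
    intro s t hs hst
    rcases eq_or_lt_of_le hst with rfl | hlt
    · exact le_rfl
    have ht : (0 : ℝ) ≤ t := hs.trans hst
    have h1 := hVI s hs (N t) (hNK t ht)
    have h2 := hVI t ht (N s) (hNK s hs)
    have key : (t - s) * ⟪V0, N t - N s⟫ ≥ ‖N t - N s‖ ^ 2 := by
      have e1 : ⟪N0 + s • V0 - N s, N t - N s⟫ ≤ 0 := h1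
      have e2 : ⟪N0 + t • V0 - N t, N s - N t⟫ ≤ 0 := h2
      have e2' : ⟪N0 + t • V0 - N t, N t - N s⟫ ≥ 0 := by
        have : N s - N t = -(N t - N s) := by abel
        rw [this, inner_neg_right] at e2
        linarith
      have ediff : ⟪(N0 + t • V0 - N t) - (N0 + s • V0 - N s), N t - N s⟫ ≥ 0 := by
        rw [inner_sub_left]; linarith
      have hsimp : (N0 + t • V0 - N t) - (N0 + s • V0 - N s)
          = (t - s) • V0 - (N t - N s) := by
        rw [sub_smul]; abel
      rw [hsimp, inner_sub_left, real_inner_smul_left, real_inner_self_eq_norm_sq] at ediff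
      linarith
    have hinner : 0 ≤ ⟪V0, N t - N s⟫ := by
      nlinarith [sq_nonneg ‖N t - N s‖, sub_pos.mpr hlt]
    rw [hθ' s hs, hθ' t ht]
    rw [inner_sub_right] at hinner
    linarith
  refine ⟨hmono, ?_⟩
  rintro ⟨C, hC⟩
  have hC0 : 0 ≤ C := le_trans (norm_nonneg _) (hC 0 le_rfl)
  -- key identity : t * θ t = ‖N t‖² - ⟪N0, N t⟫
  have hkey : ∀ t : ℝ, 0 ≤ t → t * θ t = ‖N t‖ ^ 2 - ⟪N0, N t⟫ := by
    intro t ht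
    have := horth t ht
    rw [inner_sub_left, inner_add_left, real_inner_smul_left,
      real_inner_self_eq_norm_sq] at this
    rw [hθ' t ht]
    linarith
  -- bound |⟪N0, N t⟫| ≤ ‖N0‖ * C
  have hcs : ∀ t : ℝ, 0 ≤ t → |⟪N0, N t⟫| ≤ ‖N0‖ * C := by
    intro t ht
    calc |⟪N0, N t⟫| ≤ ‖N0‖ * ‖N t‖ := abs_real_inner_le_norm _ _
      _ ≤ ‖N0‖ * C := by
        exact mul_le_mul_of_nonneg_left (hC t ht) (norm_nonneg _)
  set B : ℝ := C ^ 2 + ‖N0‖ * C with hB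
  have hBnn : 0 ≤ B := by positivity
  have hup : ∀ t : ℝ, 0 ≤ t → t * θ t ≤ B := by
    intro t ht
    have h1 := hkey t ht
    have h2 := hcs t ht
    have h3 : ‖N t‖ ^ 2 ≤ C ^ 2 := by
      have := hC t ht
      nlinarith [norm_nonneg (N t)]
    have := abs_le.mp h2
    linarith
  have hlo : ∀ t : ℝ, 0 ≤ t → -(‖N0‖ * C) ≤ t * θ t := by
    intro t ht
    have h1 := hkey t ht
    have h2 := abs_le.mp (hcs t ht)
    nlinarith [sq_nonneg ‖N t‖]
  -- θ t ≤ 0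
  have hneg : ∀ t : ℝ, 0 ≤ t → θ t ≤ 0 := by
    intro t ht
    by_contra hpos
    push_neg at hpos
    set T : ℝ := max t (B / θ t + 1) with hT
    have hTt : t ≤ T := le_max_left _ _
    have hT0 : 0 ≤ T := ht.trans hTt
    have hθT : θ t ≤ θ T := hmono t T ht hTt
    have hTbig : B / θ t + 1 ≤ T := le_max_right _ _
    have : B < T * θ t := by
      have h1 : B / θ t < T := by linarith
      calc B = (B / θ t) * θ t := by field_simp
        _ < T * θ t := by exact mul_lt_mul_of_pos_right h1 hpos
    have h2 : T * θ t ≤ T * θ T := mul_le_mul_of_nonneg_left hθT hT0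
    have h3 := hup T hT0
    linarith
  refine ⟨hneg, ?_⟩
  -- squeeze : for t ≥ 1, -(‖N0‖ * C)/t ≤ θ t ≤ 0
  have hM : 0 ≤ ‖N0‖ * C := by positivity
  have hlim1 : Filter.Tendsto (fun t : ℝ => -(‖N0‖ * C) / t) Filter.atTop (nhds 0) :=
    tendsto_const_nhds.div_atTop Filter.tendsto_id
  refine tendsto_of_tendsto_of_tendsto_of_le_of_le' hlim1 tendsto_const_nhds ?_ ?_
  · filter_upwards [Filter.eventually_ge_atTop (1 : ℝ)] with t ht1
    have ht : (0 : ℝ) ≤ t := by linarith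
    have htpos : (0 : ℝ) < t := by linarith
    have := hlo t ht
    rw [div_le_iff₀ htpos]
    nlinarith [hneg t ht]
  · filter_upwards [Filter.eventually_ge_atTop (1 : ℝ)] with t ht1
    exact hneg t (by linarith)
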